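/- arXiv:2508.19045 — 3 statements merged into one kernel-verified Lean document; each statement's English description precedes it below -/
import Mathlib

section
/- Let λ > 0 and ε < u be real numbers, let c > 0, and let z₁ < z₂ < … < z_n be real numbers (n ≥ 1). Define breakpoints q₀ := −∞, q_n := +∞, and q_i := (z_i + z_{i+1})/2 for 1 ≤ i ≤ n−1, and probabilities p_i := F_{λ,u,ε}(q_i) − F_{λ,u,ε}(q_{i−1}) for 1 ≤ i ≤ n (with F_{λ,u,ε}(−∞) := 0 and F_{λ,u,ε}(+∞) := 1). Define analogously p_i' from the scaled breakpoints c·q_i (with c·(±∞) = ±∞) using the distribution function F_{λ,cu,cε}. Then p_i' = p_i for every i = 1, …, n. -/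
/-- The Fréchet cumulative distribution function with shape parameter `lam > 0` and location
parameters `eps < u`. -/
noncomputable def frechetCDF (lam u eps : ℝ) (x : ℝ) : ℝ :=
  if x ≤ eps then 0 else Real.exp (-(((u - eps) / (x - eps)) ^ (1 / lam)))

/-- Extension of the Fréchet cdf to `EReal`, with `F(−∞) = 0` and `F(+∞) = 1`. -/
noncomputable def frechetCDFE (lam u eps : ℝ) (x : EReal) : ℝ :=
  if x = ⊥ then 0 else if x = ⊤ then 1 else frechetCDF lam u eps x.toReal

lemma frechetCDF_scale (lam u eps c x : ℝ) (hc : 0 < c) :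
    frechetCDF lam (c * u) (c * eps) (c * x) = frechetCDF lam u eps x := by
  unfold frechetCDF
  have h1 : c * x ≤ c * eps ↔ x ≤ eps := by
    constructor <;> intro h <;> nlinarith
  rcases le_or_gt x eps with h | h
  · simp [h, h1.mpr h]
  · have h2 : ¬ (c * x ≤ c * eps) := by rw [h1]; linarith
    rw [if_neg h2, if_neg (by linarith)]
    congr 2
    rw [show c * u - c * eps = c * (u - eps) by ring,
        show c * x - c * eps = c * (x - eps) by ring,
        mul_div_mul_left _ _ (ne_of_gt hc)]

/-- Invariance of the optimal quantizer probabilities under the median-ratio scaling of the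
Fréchet parameters: for quantizers `z 1 < ⋯ < z n`, breakpoints `q 0 = −∞`, `q n = +∞`,
`q i = (z i + z (i+1))/2`, and probabilities `p i = F_{λ,u,ε}(q i) − F_{λ,u,ε}(q (i−1))`,
the analogous probabilities `p' i` built from the scaled breakpoints `c·q i` and the scaled
distribution `F_{λ,cu,cε}` (with `c > 0`) coincide: `p' i = p i` for all `i = 1, …, n`. -/
theorem frechet_quantizer_probabilities_invariant
    (lam u eps c : ℝ) (hlam : 0 < lam) (hue : eps < u) (hc : 0 < c)
    (n : ℕ) (hn : 1 ≤ n) (z : ℕ → ℝ)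
    (hz : ∀ i j : ℕ, 1 ≤ i → i < j → j ≤ n → z i < z j)
    (q qc : ℕ → EReal)
    (hq0 : q 0 = ⊥) (hqn : q n = ⊤)
    (hqmid : ∀ i : ℕ, 1 ≤ i → i + 1 ≤ n → q i = (((z i + z (i + 1)) / 2 : ℝ) : EReal))
    (hqc0 : qc 0 = ⊥) (hqcn : qc n = ⊤)
    (hqcmid : ∀ i : ℕ, 1 ≤ i → i + 1 ≤ n →
      qc i = ((c * ((z i + z (i + 1)) / 2) : ℝ) : EReal))
    (p p' : ℕ → ℝ)
    (hp : ∀ i : ℕ, 1 ≤ i → i ≤ n →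
      p i = frechetCDFE lam u eps (q i) - frechetCDFE lam u eps (q (i - 1)))
    (hp' : ∀ i : ℕ, 1 ≤ i → i ≤ n →
      p' i = frechetCDFE lam (c * u) (c * eps) (qc i)
        - frechetCDFE lam (c * u) (c * eps) (qc (i - 1))) :
    ∀ i : ℕ, 1 ≤ i → i ≤ n → p' i = p i := by
  -- key: for each index j ≤ n with j = 0, j = n, or 1 ≤ j and j+1 ≤ n,
  -- the CDFE values match
  have key : ∀ j : ℕ, j ≤ n → frechetCDFE lam (c * u) (c * eps) (qc j)
      = frechetCDFE lam u eps (q j) := by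
    intro j hj
    rcases Nat.eq_zero_or_pos j with rfl | hj1
    · rw [hq0, hqc0]; rfl
    · rcases eq_or_lt_of_le hj with rfl | hjn
      · rw [hqn, hqcn]; rfl
      · have h1 : j + 1 ≤ n := hjn
        rw [hqmid j hj1 h1, hqcmid j hj1 h1]
        unfold frechetCDFE
        simp only [EReal.coe_ne_bot, EReal.coe_ne_top, if_false, EReal.toReal_coe]
        exact frechetCDF_scale lam u eps c _ hc
  intro i hi1 hin
  rw [hp i hi1 hin, hp' i hi1 hin, key i hin, key (i - 1) (le_trans (Nat.sub_le i 1) hin)]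
end

section
/- Let n ≥ 1, let p ∈ ℝⁿ with p_i > 0 for all i, let v ∈ ℝⁿ, let θ ∈ ℝ, let μ₁ > 0, and let μ₂ ∈ ℝ satisfy v_i + μ₁ + μ₂ > 0 for every i. Define the Lagrangian L(q, μ₁, μ₂) := Σ_{i=1}^n v_i·q_i + μ₁·(Σ_{i=1}^n (p_i − q_i)²/q_i − θ) + μ₂·(Σ_{i=1}^n q_i − 1) for q ∈ (0, ∞)ⁿ. Then the infimum of L(·, μ₁, μ₂) over q ∈ (0, ∞)ⁿ equals −μ₁·θ − μ₂ + Σ_{i=1}^n ( 2·p_i·√(μ₁·(v_i + μ₁ + μ₂)) − 2·μ₁·p_i ), and it is attained at q_i = p_i·√(μ₁/(v_i + μ₁ + μ₂)). -/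
private lemma expand_term (v μ₁ μ₂ p q : ℝ) (hq : 0 < q) :
    v * q + μ₁ * ((p - q) ^ 2 / q) + μ₂ * q
      = (v + μ₁ + μ₂) * q + μ₁ * p ^ 2 / q - 2 * μ₁ * p := by
  field_simp
  ring

private lemma key_ge (p μ₁ a q : ℝ) (hμ : 0 < μ₁) (ha : 0 < a) (hq : 0 < q) :
    2 * p * Real.sqrt (μ₁ * a) - 2 * μ₁ * p ≤ a * q + μ₁ * p ^ 2 / q - 2 * μ₁ * p := by
  set s := Real.sqrt (μ₁ * a) with hs
  have hs2 : s ^ 2 = μ₁ * a := Real.sq_sqrt (by positivity)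
  have h : (2 * p * s - a * q) * q ≤ μ₁ * p ^ 2 := by
    have hq2 : s ^ 2 * q ^ 2 = μ₁ * a * q ^ 2 := by rw [hs2]
    nlinarith [sq_nonneg (s * q - μ₁ * p), hq2, hμ]
  have h2 : 2 * p * s - a * q ≤ μ₁ * p ^ 2 / q := (le_div_iff₀ hq).mpr h
  linarith

private lemma key_eq (p μ₁ a : ℝ) (hp : 0 < p) (hμ : 0 < μ₁) (ha : 0 < a) :
    a * (p * Real.sqrt (μ₁ / a)) + μ₁ * p ^ 2 / (p * Real.sqrt (μ₁ / a)) - 2 * μ₁ * p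
      = 2 * p * Real.sqrt (μ₁ * a) - 2 * μ₁ * p := by
  set t := Real.sqrt (μ₁ / a) with htdef
  have ht : 0 < t := Real.sqrt_pos.mpr (by positivity)
  have ht2 : t ^ 2 = μ₁ / a := Real.sq_sqrt (by positivity)
  have hμa : μ₁ = t ^ 2 * a := by rw [ht2]; field_simp
  have hs : Real.sqrt (μ₁ * a) = t * a := by
    have h1 : μ₁ * a = (t * a) ^ 2 := by rw [mul_pow, ht2]; field_simp
    rw [h1, Real.sqrt_sq (mul_pos ht ha).le]
  rw [hs, hμa]
  field_simp
  ring

/-- Dual-function evaluation in the proof of Theorem 1 of the paper: for the Lagrangian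
`L(q) = Σ v_i q_i + μ₁(Σ (p_i − q_i)²/q_i − θ) + μ₂(Σ q_i − 1)` over `q ∈ (0,∞)ⁿ` with
`μ₁ > 0` and `v_i + μ₁ + μ₂ > 0` for all `i`, the infimum equals
`−μ₁θ − μ₂ + Σ (2 p_i √(μ₁ (v_i + μ₁ + μ₂)) − 2 μ₁ p_i)` and is attained at
`q_i = p_i √(μ₁/(v_i + μ₁ + μ₂))`. -/
theorem lagrangian_dual_function (n : ℕ) (hn : 1 ≤ n) (p v : Fin n → ℝ)
    (hp : ∀ i, 0 < p i) (θ : ℝ) (μ₁ : ℝ) (hμ : 0 < μ₁) (μ₂ : ℝ)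
    (hpos : ∀ i, 0 < v i + μ₁ + μ₂)
    (L : (Fin n → ℝ) → ℝ)
    (hL : ∀ q : Fin n → ℝ, L q = (∑ i, v i * q i)
      + μ₁ * ((∑ i, (p i - q i) ^ 2 / q i) - θ) + μ₂ * ((∑ i, q i) - 1)) :
    IsLeast (L '' {q : Fin n → ℝ | ∀ i, 0 < q i})
      (-μ₁ * θ - μ₂ + ∑ i, (2 * p i * Real.sqrt (μ₁ * (v i + μ₁ + μ₂)) - 2 * μ₁ * p i)) ∧
    L (fun i => p i * Real.sqrt (μ₁ / (v i + μ₁ + μ₂)))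
      = -μ₁ * θ - μ₂ + ∑ i, (2 * p i * Real.sqrt (μ₁ * (v i + μ₁ + μ₂)) - 2 * μ₁ * p i) := by
  -- Rewrite L as a sum of per-coordinate terms plus constants.
  have hL' : ∀ q : Fin n → ℝ, (∀ i, 0 < q i) →
      L q = -μ₁ * θ - μ₂ + ∑ i, ((v i + μ₁ + μ₂) * q i + μ₁ * (p i) ^ 2 / q i - 2 * μ₁ * p i) := by
    intro q hq
    rw [hL]
    have := fun i (_ : i ∈ Finset.univ) => expand_term (v i) μ₁ μ₂ (p i) (q i) (hq i)
    rw [← Finset.sum_congr rfl this]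
    rw [Finset.sum_add_distrib, Finset.sum_add_distrib, ← Finset.mul_sum, ← Finset.mul_sum]
    ring
  have hqstar : ∀ i, 0 < p i * Real.sqrt (μ₁ / (v i + μ₁ + μ₂)) := by
    intro i
    exact mul_pos (hp i) (Real.sqrt_pos.mpr (div_pos hμ (hpos i)))
  have hval : L (fun i => p i * Real.sqrt (μ₁ / (v i + μ₁ + μ₂)))
      = -μ₁ * θ - μ₂ + ∑ i, (2 * p i * Real.sqrt (μ₁ * (v i + μ₁ + μ₂)) - 2 * μ₁ * p i) := by
    rw [hL' _ hqstar]
    congr 1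
    exact Finset.sum_congr rfl fun i _ => key_eq (p i) μ₁ _ (hp i) hμ (hpos i)
  refine ⟨⟨⟨_, hqstar, hval⟩, ?_⟩, hval⟩
  rintro x ⟨q, hq, rfl⟩
  rw [hL' q hq]
  have : ∑ i, (2 * p i * Real.sqrt (μ₁ * (v i + μ₁ + μ₂)) - 2 * μ₁ * p i)
      ≤ ∑ i, ((v i + μ₁ + μ₂) * q i + μ₁ * (p i) ^ 2 / q i - 2 * μ₁ * p i) :=
    Finset.sum_le_sum fun i _ => key_ge (p i) μ₁ _ (q i) hμ (hpos i) (hq i)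
  linarith
end

section
/- Let n ≥ 1, let p ∈ ℝⁿ with p_i > 0 for all i and Σ_{i=1}^n p_i = 1, let v ∈ ℝⁿ, and let θ ≥ 0. Let q ∈ ℝⁿ satisfy q_i > 0 for all i, Σ_{i=1}^n q_i = 1, and Σ_{i=1}^n (p_i − q_i)²/q_i ≤ θ. Then for every μ₁ > 0 and μ₂ ∈ ℝ with v_i + μ₁ + μ₂ > 0 for every i, one has Σ_{i=1}^n v_i·q_i ≥ −μ₁·θ − μ₂ + Σ_{i=1}^n ( 2·p_i·√(μ₁·(v_i + μ₁ + μ₂)) − 2·μ₁·p_i ). -/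
/-- Weak duality for the χ²-divergence ambiguity set of Theorem 1 of the paper: every `q` in
the probability simplex with `Σ (p_i − q_i)²/q_i ≤ θ` satisfies
`Σ v_i q_i ≥ −μ₁θ − μ₂ + Σ (2 p_i √(μ₁ (v_i + μ₁ + μ₂)) − 2 μ₁ p_i)` for every dual pair
`μ₁ > 0`, `μ₂ ∈ ℝ` with `v_i + μ₁ + μ₂ > 0` for all `i`. -/
theorem chi2_ambiguity_weak_duality (n : ℕ) (hn : 1 ≤ n) (p v q : Fin n → ℝ)
    (hp : ∀ i, 0 < p i) (hpsum : ∑ i, p i = 1) (θ : ℝ) (hθ : 0 ≤ θ)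
    (hq : ∀ i, 0 < q i) (hqsum : ∑ i, q i = 1)
    (hdiv : ∑ i, (p i - q i) ^ 2 / q i ≤ θ)
    (μ₁ μ₂ : ℝ) (hμ : 0 < μ₁) (hpos : ∀ i, 0 < v i + μ₁ + μ₂) :
    -μ₁ * θ - μ₂ + ∑ i, (2 * p i * Real.sqrt (μ₁ * (v i + μ₁ + μ₂)) - 2 * μ₁ * p i)
      ≤ ∑ i, v i * q i := by
  have key : ∀ i, 2 * p i * Real.sqrt (μ₁ * (v i + μ₁ + μ₂)) - 2 * μ₁ * p i
      ≤ v i * q i + μ₁ * ((p i - q i) ^ 2 / q i) + μ₂ * q i := by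
    intro i
    set a := v i + μ₁ + μ₂ with ha
    have hqi := hq i
    have hpi := hp i
    have hai := hpos i
    -- AM-GM: 2√(x y) ≤ x + y with x = a q, y = μ₁ p²/q
    have hx : (0:ℝ) ≤ a * q i := by positivity
    have hy : (0:ℝ) ≤ μ₁ * p i ^ 2 / q i := by positivity
    have hsq : Real.sqrt (a * q i) * Real.sqrt (μ₁ * p i ^ 2 / q i)
        = p i * Real.sqrt (μ₁ * a) := by
      rw [← Real.sqrt_mul hx]
      have : a * q i * (μ₁ * p i ^ 2 / q i) = p i ^ 2 * (μ₁ * a) := by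
        field_simp
      rw [this, Real.sqrt_mul (by positivity), Real.sqrt_sq hpi.le]
    have amgm : 2 * (p i * Real.sqrt (μ₁ * a)) ≤ a * q i + μ₁ * p i ^ 2 / q i := by
      have h1 := sq_nonneg (Real.sqrt (a * q i) - Real.sqrt (μ₁ * p i ^ 2 / q i))
      have h2 := Real.sq_sqrt hx
      have h3 := Real.sq_sqrt hy
      nlinarith [hsq]
    have hexp : v i * q i + μ₁ * ((p i - q i) ^ 2 / q i) + μ₂ * q i
        = a * q i + μ₁ * p i ^ 2 / q i - 2 * μ₁ * p i := by
      field_simp [ha]; ring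
    rw [hexp]; linarith
  have hsumkey : ∑ i, (2 * p i * Real.sqrt (μ₁ * (v i + μ₁ + μ₂)) - 2 * μ₁ * p i)
      ≤ ∑ i, (v i * q i + μ₁ * ((p i - q i) ^ 2 / q i) + μ₂ * q i) :=
    Finset.sum_le_sum fun i _ => key i
  have hsplit : ∑ i, (v i * q i + μ₁ * ((p i - q i) ^ 2 / q i) + μ₂ * q i)
      = (∑ i, v i * q i) + μ₁ * (∑ i, (p i - q i) ^ 2 / q i) + μ₂ := by
    rw [Finset.sum_add_distrib, Finset.sum_add_distrib, ← Finset.mul_sum, ← Finset.mul_sum,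
      hqsum, mul_one]
  have hmul : μ₁ * (∑ i, (p i - q i) ^ 2 / q i) ≤ μ₁ * θ :=
    mul_le_mul_of_nonneg_left hdiv hμ.le
  linarith [hsumkey, hsplit ▸ hsumkey]
end
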